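/- Let f:D→ℝ be strongly tree-submodular and x∈D. Let V₀ = { i∈V : x_i ≠ r_i }, and for S ⊆ V₀ define the labeling y^S ∈ D by y^S_i = parent(x_i) if i∈S and y^S_i = x_i otherwise. Then the set function g(S) = f(y^S) is submodular on 2^{V₀}: g(S) + g(T) ≥ g(S∩T) + g(S∪T) for all S,T ⊆ V₀. (The restriction of f to INWARD(x) is a submodular function.) -/

import Mathlib

/-- A finite rooted tree on vertex set `V`, encoded by its root, the parent function
(with `parent root = root`) and the depth function (distance to the root). -/
structure RTree (V : Type*) where
  root : V
  parent : V → V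
  depth : V → ℕ
  parent_root : parent root = root
  depth_root : depth root = 0
  depth_parent : ∀ v, v ≠ root → depth (parent v) + 1 = depth v

namespace RTree

variable {V : Type*} (T : RTree V)

/-- `a ⪯ b` : `a` is an ancestor of `b`, i.e. `a` lies on the path from `b` to the root. -/
def anc (a b : V) : Prop := ∃ k : ℕ, T.parent^[k] b = a

theorem iterate_depth_aux : ∀ (n : ℕ) (v : V), T.depth v = n → T.parent^[n] v = T.root := by
  intro n
  induction n with
  | zero =>
    intro v hn
    by_cases hv : v = T.root
    · simp [hv]
    · have := T.depth_parent v hv; omega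
  | succ n ih =>
    intro v hn
    have hv : v ≠ T.root := by
      intro h; rw [h, T.depth_root] at hn; omega
    have h := T.depth_parent v hv
    rw [Function.iterate_succ_apply]
    exact ih (T.parent v) (by omega)

theorem iterate_depth (v : V) : T.parent^[T.depth v] v = T.root :=
  T.iterate_depth_aux (T.depth v) v rfl

theorem anc_root (b : V) : T.anc T.root b := ⟨T.depth b, T.iterate_depth b⟩

theorem exists_lcaIndex (a b : V) : ∃ k : ℕ, T.anc (T.parent^[k] a) b :=
  ⟨T.depth a, by rw [T.iterate_depth a]; exact T.anc_root b⟩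

open Classical in
/-- The highest common ancestor of `a` and `b` : the deepest vertex that is an ancestor
of both `a` and `b` (i.e. the unique vertex of the path `P[a→b]` that is an ancestor of both). -/
noncomputable def lca (a b : V) : V := T.parent^[Nat.find (T.exists_lcaIndex a b)] a

/-- `ρ(a,b)` : the number of edges of the unique path `P[a→b]` from `a` to `b`. -/
noncomputable def dist (a b : V) : ℕ :=
  (T.depth a - T.depth (T.lca a b)) + (T.depth b - T.depth (T.lca a b))

open Classical in
/-- `P[a→b, d]` : the `d`-th vertex of the path from `a` to `b` (first the ascending part
from `a` to the highest common ancestor, then the descending part towards `b`);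
by convention it equals `b` for `d > ρ(a,b)`. -/
noncomputable def pathVertex (a b : V) (d : ℕ) : V :=
  if T.dist a b ≤ d then b
  else if d ≤ T.depth a - T.depth (T.lca a b) then T.parent^[d] a
  else T.parent^[T.dist a b - d] b

open Classical in
/-- `a ⊓ b` : the member of `{P[a→b,⌊ρ(a,b)/2⌋], P[a→b,⌈ρ(a,b)/2⌉]}` that is an
ancestor of the other one. -/
noncomputable def cap (a b : V) : V :=
  if T.anc (T.pathVertex a b (T.dist a b / 2)) (T.pathVertex a b ((T.dist a b + 1) / 2))
  then T.pathVertex a b (T.dist a b / 2)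
  else T.pathVertex a b ((T.dist a b + 1) / 2)

open Classical in
/-- `a ⊔ b` : the member of `{P[a→b,⌊ρ(a,b)/2⌋], P[a→b,⌈ρ(a,b)/2⌉]}` that is a
descendant of the other one. -/
noncomputable def cup (a b : V) : V :=
  if T.anc (T.pathVertex a b (T.dist a b / 2)) (T.pathVertex a b ((T.dist a b + 1) / 2))
  then T.pathVertex a b ((T.dist a b + 1) / 2)
  else T.pathVertex a b (T.dist a b / 2)

/-- `a ∧ b` : the highest common ancestor of `a` and `b`. -/
noncomputable def meet (a b : V) : V := T.lca a b

/-- `a ∨ b` : the unique vertex of `P[a→b]` with `ρ(a, a∨b) = ρ(a∧b, b)`. -/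
noncomputable def join (a b : V) : V :=
  T.pathVertex a b (T.depth b - T.depth (T.lca a b))

/-- `a ↑^d b = P[a→b,d] ∧ b`. -/
noncomputable def up (d : ℕ) (a b : V) : V := T.meet (T.pathVertex a b d) b

/-- `a ↓_d b = P[a→b, ρ(a ↑^d b, b)]`. -/
noncomputable def down (d : ℕ) (a b : V) : V :=
  T.pathVertex a b (T.dist (T.up d a b) b)

end RTree

section Product

variable {ι : Type*} {V : ι → Type*}

/-- `f` is strongly tree-submodular w.r.t. the trees `T i`:
`f(x) + f(y) ≥ f(x ⊓ y) + f(x ⊔ y)`, the operations acting componentwise. -/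
def StronglyTreeSubmodular (T : ∀ i, RTree (V i)) (f : (∀ i, V i) → ℝ) : Prop :=
  ∀ x y : ∀ i, V i,
    f (fun i => (T i).cap (x i) (y i)) + f (fun i => (T i).cup (x i) (y i)) ≤ f x + f y

/-- `INWARD(x) = { y ∈ NEIB(x) : y ⪯ x }`, where `NEIB(x) = {y : max_i ρ(x_i,y_i) ≤ 1}`. -/
def inward (T : ∀ i, RTree (V i)) (x : ∀ i, V i) : Set (∀ i, V i) :=
  {y | (∀ i, (T i).dist (x i) (y i) ≤ 1) ∧ ∀ i, (T i).anc (y i) (x i)}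

/-- `OUTWARD(x) = { y ∈ NEIB(x) : x ⪯ y }`. -/
def outward (T : ∀ i, RTree (V i)) (x : ∀ i, V i) : Set (∀ i, V i) :=
  {y | (∀ i, (T i).dist (x i) (y i) ≤ 1) ∧ ∀ i, (T i).anc (x i) (y i)}

end Product

open Classical in
/-- The labeling `y^S` obtained from `x` by replacing `x_i` with `parent(x_i)` for
`i ∈ S` and keeping `x_i` otherwise. -/
noncomputable def inwardShift {ι : Type*} {V : ι → Type*} (T : ∀ i, RTree (V i))
    (x : ∀ i, V i) (S : Set ι) : ∀ i, V i :=
  fun i => if i ∈ S then (T i).parent (x i) else x i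

/-! On every coordinate, `y^S_i` and `y^U_i` are either equal or a vertex and its parent.
For such a pair `⊓` picks the parent and `⊔` the child, so `y^S ⊓ y^U = y^(S ∪ U)` and
`y^S ⊔ y^U = y^(S ∩ U)`; strong tree-submodularity at `(y^S, y^U)` is then the claim. -/

namespace RTree

open Classical

variable {V : Type*} (T : RTree V)

theorem lca_self (a : V) : T.lca a a = a := by
  have h : Nat.find (T.exists_lcaIndex a a) = 0 := Nat.find_eq_zero _ |>.mpr ⟨0, rfl⟩
  rw [lca, h, Function.iterate_zero_apply]

theorem dist_self (a : V) : T.dist a a = 0 := by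
  simp [dist, lca_self]

theorem pathVertex_of_dist_le {a b : V} {d : ℕ} (h : T.dist a b ≤ d) :
    T.pathVertex a b d = b := if_pos h

theorem pathVertex_zero {a b : V} (h : 0 < T.dist a b) : T.pathVertex a b 0 = a := by
  rw [pathVertex, if_neg (by omega), if_pos (Nat.zero_le _), Function.iterate_zero_apply]

theorem cap_self (a : V) : T.cap a a = a := by
  simp [cap, pathVertex_of_dist_le, dist_self]

theorem cup_self (a : V) : T.cup a a = a := by
  simp [cup, pathVertex_of_dist_le, dist_self]

theorem cap_of_dist_eq_one {a b : V} (h : T.dist a b = 1) :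
    T.cap a b = if T.anc a b then a else b := by
  simp [cap, h, pathVertex_zero, pathVertex_of_dist_le]

theorem cup_of_dist_eq_one {a b : V} (h : T.dist a b = 1) :
    T.cup a b = if T.anc a b then b else a := by
  simp [cup, h, pathVertex_zero, pathVertex_of_dist_le]

theorem depth_parent_le (v : V) : T.depth (T.parent v) ≤ T.depth v := by
  by_cases hv : v = T.root
  · rw [hv, T.parent_root]
  · exact (T.depth_parent v hv ▸ Nat.le_succ _)

theorem depth_iterate_parent_le (k : ℕ) (v : V) : T.depth (T.parent^[k] v) ≤ T.depth v := by
  induction k generalizing v with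
  | zero => rfl
  | succ k ih => exact (ih (T.parent v)).trans (T.depth_parent_le v)

theorem anc_parent (b : V) : T.anc (T.parent b) b := ⟨1, rfl⟩

theorem not_anc_parent {b : V} (hb : b ≠ T.root) : ¬T.anc b (T.parent b) := by
  rintro ⟨k, hk⟩
  have hle := hk ▸ T.depth_iterate_parent_le k (T.parent b)
  have := T.depth_parent b hb
  omega

theorem lca_parent_left (b : V) : T.lca (T.parent b) b = T.parent b := by
  have h : Nat.find (T.exists_lcaIndex (T.parent b) b) = 0 :=
    Nat.find_eq_zero _ |>.mpr (T.anc_parent b)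
  rw [lca, h, Function.iterate_zero_apply]

theorem lca_parent_right {b : V} (hb : b ≠ T.root) : T.lca b (T.parent b) = T.parent b := by
  have h : Nat.find (T.exists_lcaIndex b (T.parent b)) = 1 := by
    rw [Nat.find_eq_iff]
    refine ⟨⟨0, rfl⟩, fun m hm => ?_⟩
    obtain rfl : m = 0 := by omega
    exact T.not_anc_parent hb
  rw [lca, h, Function.iterate_one]

theorem dist_parent_left {b : V} (hb : b ≠ T.root) : T.dist (T.parent b) b = 1 := by
  have := T.depth_parent b hb
  rw [dist, lca_parent_left]
  omega

theorem dist_parent_right {b : V} (hb : b ≠ T.root) : T.dist b (T.parent b) = 1 := by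
  have := T.depth_parent b hb
  rw [dist, lca_parent_right T hb]
  omega

theorem cap_parent_left {b : V} (hb : b ≠ T.root) : T.cap (T.parent b) b = T.parent b := by
  rw [cap_of_dist_eq_one T (T.dist_parent_left hb), if_pos (T.anc_parent b)]

theorem cup_parent_left {b : V} (hb : b ≠ T.root) : T.cup (T.parent b) b = b := by
  rw [cup_of_dist_eq_one T (T.dist_parent_left hb), if_pos (T.anc_parent b)]

theorem cap_parent_right {b : V} (hb : b ≠ T.root) : T.cap b (T.parent b) = T.parent b := by
  rw [cap_of_dist_eq_one T (T.dist_parent_right hb), if_neg (T.not_anc_parent hb)]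

theorem cup_parent_right {b : V} (hb : b ≠ T.root) : T.cup b (T.parent b) = b := by
  rw [cup_of_dist_eq_one T (T.dist_parent_right hb), if_neg (T.not_anc_parent hb)]

end RTree

section InwardShift

variable {ι : Type*} {V : ι → Type*} (T : ∀ i, RTree (V i)) (x : ∀ i, V i) {S U : Set ι}

theorem cap_inwardShift (hS : ∀ i ∈ S, x i ≠ (T i).root) (hU : ∀ i ∈ U, x i ≠ (T i).root) :
    (fun i => (T i).cap (inwardShift T x S i) (inwardShift T x U i)) =
      inwardShift T x (S ∪ U) := by
  funext i
  by_cases hiS : i ∈ S <;> by_cases hiU : i ∈ U <;>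
    simp [inwardShift, hiS, hiU, RTree.cap_self, RTree.cap_parent_left, RTree.cap_parent_right,
      hS i, hU i]

theorem cup_inwardShift (hS : ∀ i ∈ S, x i ≠ (T i).root) (hU : ∀ i ∈ U, x i ≠ (T i).root) :
    (fun i => (T i).cup (inwardShift T x S i) (inwardShift T x U i)) =
      inwardShift T x (S ∩ U) := by
  funext i
  by_cases hiS : i ∈ S <;> by_cases hiU : i ∈ U <;>
    simp [inwardShift, hiS, hiU, RTree.cup_self, RTree.cup_parent_left, RTree.cup_parent_right,
      hS i, hU i]

end InwardShift

theorem inward_restriction_submodular_general {ι : Type*} {V : ι → Type*}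
    (T : ∀ i, RTree (V i)) (f : (∀ i, V i) → ℝ)
    (hf : StronglyTreeSubmodular T f) (x : ∀ i, V i) (S U : Set ι)
    (hS : ∀ i ∈ S, x i ≠ (T i).root) (hU : ∀ i ∈ U, x i ≠ (T i).root) :
    f (inwardShift T x (S ∩ U)) + f (inwardShift T x (S ∪ U)) ≤
      f (inwardShift T x S) + f (inwardShift T x U) := by
  have h := hf (inwardShift T x S) (inwardShift T x U)
  rw [cap_inwardShift T x hS hU, cup_inwardShift T x hS hU] at h
  linarith

/-- The restriction of a strongly tree-submodular function to
`INWARD(x)` is a submodular set function: with `V₀ = {i : x_i ≠ r_i}` and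
`g(S) = f(y^S)`, one has `g(S) + g(U) ≥ g(S ∩ U) + g(S ∪ U)` for all `S, U ⊆ V₀`. -/
theorem inward_restriction_submodular {ι : Type*} [Fintype ι] {V : ι → Type*}
    [∀ i, Fintype (V i)] (T : ∀ i, RTree (V i)) (f : (∀ i, V i) → ℝ)
    (hf : StronglyTreeSubmodular T f) (x : ∀ i, V i) (S U : Set ι)
    (hS : ∀ i ∈ S, x i ≠ (T i).root) (hU : ∀ i ∈ U, x i ≠ (T i).root) :
    f (inwardShift T x (S ∩ U)) + f (inwardShift T x (S ∪ U)) ≤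
      f (inwardShift T x S) + f (inwardShift T x U) :=
  inward_restriction_submodular_general T f hf x S U hS hU
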